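/- Let 0 < δ < 1, ε > 0, and σ_ℓ = 1/2 + 1/(2·exp(ℓ^{1-δ})). Then the ratio ((∑_p p^{-2σ_ℓ}) / (∑_p p^{-2σ_{ℓ-1}}))^{(1+ε)/2} tends to 1 as ℓ → ∞. -/

import Mathlib

/-!
By the Euler product, `∑_p -log (1 - p^{-t}) = log ζ(t)`, and since `ζ` has a simple pole of
residue `1` at `t = 1`, this is `log (1/(t-1)) + o(1)` as `t → 1⁺`. Termwise
`x ≤ -log (1 - x) ≤ x + 2x²`, so the prime zeta function `P(t) = ∑_p p^{-t}` differs from it by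
at most `2 P(2)`. Since `2σ_ℓ = 1 + exp(-ℓ^{1-δ})`, this gives `P(2σ_ℓ) = ℓ^{1-δ} + O(1)`, and
`ℓ^{1-δ} ~ (ℓ-1)^{1-δ}`, so the ratio tends to `1`.
-/

open Real Filter Topology Asymptotics

lemma le_neg_log_one_sub {x : ℝ} (hx : x < 1) : x ≤ -log (1 - x) := by
  linarith [log_le_sub_one_of_pos (sub_pos.mpr hx)]

lemma neg_log_one_sub_le {x : ℝ} (hx : x ≤ 1 / 2) :
    -log (1 - x) ≤ x + 2 * x ^ 2 := by
  have hpos : 0 < 1 - x := by linarith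
  have hinv : (1 - x)⁻¹ - 1 ≤ x + 2 * x ^ 2 := by
    rw [sub_le_iff_le_add, inv_le_iff_one_le_mul₀ hpos]
    nlinarith
  linarith [log_inv (1 - x) ▸ log_le_sub_one_of_pos (inv_pos.mpr hpos)]

lemma Nat.Primes.rpow_neg_le_half (p : Nat.Primes) {t : ℝ} (ht : 1 ≤ t) :
    (p : ℝ) ^ (-t) ≤ 1 / 2 := by
  have hp : (2 : ℝ) ≤ p := by exact_mod_cast p.prop.two_le
  calc (p : ℝ) ^ (-t) ≤ (p : ℝ) ^ (-1 : ℝ) :=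
        rpow_le_rpow_of_exponent_le (by linarith) (by linarith)
    _ = (p : ℝ)⁻¹ := rpow_neg_one _
    _ ≤ 1 / 2 := by rw [one_div]; exact inv_anti₀ two_pos hp

noncomputable def primeZeta (t : ℝ) : ℝ := ∑' p : Nat.Primes, (p : ℝ) ^ (-t)

lemma summable_neg_log_one_sub_prime_rpow {t : ℝ} (ht : 1 < t) :
    Summable fun p : Nat.Primes ↦ -log (1 - (p : ℝ) ^ (-t)) := by
  have hP := Nat.Primes.summable_rpow.mpr (neg_lt_neg ht)
  refine .of_nonneg_of_le (fun p ↦ ?_) (fun p ↦ ?_) (hP.mul_left 2) <;>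
  · have hx := p.rpow_neg_le_half ht.le
    have hx₀ := rpow_nonneg (Nat.cast_nonneg (p : ℕ)) (-t)
    nlinarith [le_neg_log_one_sub (x := (p : ℝ) ^ (-t)) (by linarith), neg_log_one_sub_le hx]

lemma abs_tsum_neg_log_one_sub_prime_rpow_sub_primeZeta_le {t : ℝ} (ht : 1 < t) :
    |∑' p : Nat.Primes, -log (1 - (p : ℝ) ^ (-t)) - primeZeta t| ≤ 2 * primeZeta 2 := by
  have hP := Nat.Primes.summable_rpow.mpr (neg_lt_neg ht)
  have hP₂ : Summable fun p : Nat.Primes ↦ (p : ℝ) ^ (-2 : ℝ) :=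
    Nat.Primes.summable_rpow.mpr (by norm_num)
  have hL := summable_neg_log_one_sub_prime_rpow ht
  have lower : primeZeta t ≤ ∑' p : Nat.Primes, -log (1 - (p : ℝ) ^ (-t)) :=
    hP.tsum_le_tsum (fun p ↦ le_neg_log_one_sub (by linarith [p.rpow_neg_le_half ht.le])) hL
  have upper : ∑' p : Nat.Primes, -log (1 - (p : ℝ) ^ (-t)) ≤ primeZeta t + 2 * primeZeta 2 := by
    rw [primeZeta, primeZeta, ← tsum_mul_left, ← hP.tsum_add (hP₂.mul_left 2)]
    refine hL.tsum_le_tsum (fun p ↦ ?_) (hP.add (hP₂.mul_left 2))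
    have hp : (1 : ℝ) ≤ p := by exact_mod_cast p.prop.one_lt.le
    have hsq : ((p : ℝ) ^ (-t)) ^ 2 ≤ (p : ℝ) ^ (-2 : ℝ) := by
      rw [← rpow_natCast, ← rpow_mul (by linarith)]
      exact rpow_le_rpow_of_exponent_le hp (by push_cast; linarith)
    linarith [neg_log_one_sub_le (p.rpow_neg_le_half ht.le)]
  rw [abs_le]
  constructor <;> linarith

lemma ofReal_exp_tsum_neg_log_one_sub_prime_rpow {t : ℝ} (ht : 1 < t) :
    (exp (∑' p : Nat.Primes, -log (1 - (p : ℝ) ^ (-t))) : ℂ) = riemannZeta t := by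
  rw [← riemannZeta_eulerProduct_exp_log (by simpa using ht), Complex.ofReal_exp,
    Complex.ofReal_tsum]
  congr 2 with p
  have hx := p.rpow_neg_le_half ht.le
  rw [Complex.ofReal_neg, Complex.ofReal_log (by linarith), Complex.ofReal_sub,
    Complex.ofReal_one, Complex.ofReal_cpow (Nat.cast_nonneg _), Complex.ofReal_neg]
  rfl

lemma tendsto_tsum_neg_log_one_sub_prime_rpow_add_log :
    Tendsto (fun t : ℝ ↦ ∑' p : Nat.Primes, -log (1 - (p : ℝ) ^ (-t)) + log (t - 1))
      (𝓝[>] 1) (𝓝 0) := by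
  have hres : Tendsto (fun t : ℝ ↦ ((t : ℂ) - 1) * riemannZeta t) (𝓝[>] 1) (𝓝 1) :=
    riemannZeta_residue_one.comp <| (Complex.continuous_ofReal.tendsto' 1 1 (by simp)).inf <|
      tendsto_principal_principal.mpr fun t ht ↦ by simpa using ht.ne'
  have hexp : Tendsto
      (fun t : ℝ ↦ exp (∑' p : Nat.Primes, -log (1 - (p : ℝ) ^ (-t)) + log (t - 1)))
      (𝓝[>] 1) (𝓝 1) := by
    refine ((Complex.continuous_re.tendsto 1).comp hres).congr' ?_
    filter_upwards [self_mem_nhdsWithin] with t (ht : 1 < t)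
    rw [Function.comp_apply, ← ofReal_exp_tsum_neg_log_one_sub_prime_rpow ht, exp_add,
      exp_log (by linarith), ← Complex.ofReal_one, ← Complex.ofReal_sub, ← Complex.ofReal_mul,
      Complex.ofReal_re, mul_comm]
  simpa [Function.comp_def] using (continuousAt_log one_ne_zero).tendsto.comp hexp

lemma isBigO_primeZeta_add_log :
    (fun t ↦ primeZeta t + log (t - 1)) =O[𝓝[>] 1] fun _ ↦ (1 : ℝ) := by
  have hdiff : (fun t ↦ ∑' p : Nat.Primes, -log (1 - (p : ℝ) ^ (-t)) - primeZeta t)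
      =O[𝓝[>] 1] fun _ ↦ (1 : ℝ) :=
    .of_bound (2 * primeZeta 2) <| by
      filter_upwards [self_mem_nhdsWithin] with t (ht : 1 < t)
      simpa using abs_tsum_neg_log_one_sub_prime_rpow_sub_primeZeta_le ht
  refine ((tendsto_tsum_neg_log_one_sub_prime_rpow_add_log.isBigO_one ℝ).sub hdiff).congr_left ?_
  intro t
  ring

lemma primeZeta_one_add_exp_neg_isEquivalent :
    (fun x ↦ primeZeta (1 + exp (-x))) ~[atTop] id := by
  have hs : Tendsto (fun x ↦ 1 + exp (-x)) atTop (𝓝[>] 1) := by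
    refine tendsto_nhdsWithin_iff.mpr ⟨?_, .of_forall fun x ↦ ?_⟩
    · simpa using (tendsto_exp_neg_atTop_nhds_zero.const_add 1)
    · simpa using exp_pos (-x)
  have hbig := (isBigO_primeZeta_add_log.comp_tendsto hs).trans_isLittleO
    (isLittleO_const_id_atTop (1 : ℝ))
  refine hbig.congr_left fun x ↦ ?_
  simp [sub_eq_add_neg]

lemma natCast_rpow_isEquivalent_natCast_sub_one_rpow (r : ℝ) :
    (fun n : ℕ ↦ (n : ℝ) ^ r) ~[atTop] fun n ↦ ((n - 1 : ℕ) : ℝ) ^ r := by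
  refine IsEquivalent.rpow (fun n ↦ Nat.cast_nonneg _) ?_
  have h : (fun n : ℕ ↦ ((n - 1 : ℕ) : ℝ)) ~[atTop] fun n ↦ (n : ℝ) := by
    refine (IsEquivalent.refl.sub_isLittleO ((isLittleO_one_left_iff ℝ).mpr ?_)).congr_left ?_
    · simpa using tendsto_natCast_atTop_atTop
    · filter_upwards [eventually_ge_atTop 1] with n hn
      simp [Nat.cast_sub hn]
  exact h.symm

theorem stmt_9_general (δ ε : ℝ) (hδ1 : δ < 1) :
    Filter.Tendsto
      (fun ℓ : ℕ =>
        ((∑' p : Nat.Primes, (p : ℝ) ^ (-(2 * (1/2 + 1/(2 * Real.exp ((ℓ : ℝ) ^ (1 - δ))))))) /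
         (∑' p : Nat.Primes,
            (p : ℝ) ^ (-(2 * (1/2 + 1/(2 * Real.exp (((ℓ - 1 : ℕ) : ℝ) ^ (1 - δ)))))))) ^ ((1 + ε)/2))
      Filter.atTop (nhds 1) := by
  set a : ℕ → ℝ := fun ℓ ↦ (ℓ : ℝ) ^ (1 - δ)
  set b : ℕ → ℝ := fun ℓ ↦ ((ℓ - 1 : ℕ) : ℝ) ^ (1 - δ)
  have hexponent (x : ℝ) : -(2 * (1 / 2 + 1 / (2 * exp x))) = -(1 + exp (-x)) := by
    rw [exp_neg]
    field_simp
  have hab : a ~[atTop] b := natCast_rpow_isEquivalent_natCast_sub_one_rpow (1 - δ)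
  have ha : Tendsto a atTop atTop :=
    (tendsto_rpow_atTop (by linarith)).comp tendsto_natCast_atTop_atTop
  have hb : Tendsto b atTop atTop := hab.tendsto_atTop ha
  have hfa := primeZeta_one_add_exp_neg_isEquivalent.comp_tendsto ha
  have hfb := primeZeta_one_add_exp_neg_isEquivalent.comp_tendsto hb
  have hratio := (isEquivalent_iff_tendsto_one
    (hfb.symm.tendsto_atTop hb |>.eventually_ne_atTop 0)).mp ((hfa.trans hab).trans hfb.symm)
  simp only [hexponent]
  simpa only [one_rpow, Pi.div_apply, Function.comp_apply, primeZeta]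
    using hratio.rpow_const (p := (1 + ε) / 2) (Or.inl one_ne_zero)

theorem stmt_9 (δ ε : ℝ) (hδ0 : 0 < δ) (hδ1 : δ < 1) (hε : 0 < ε) :
    Filter.Tendsto
      (fun ℓ : ℕ =>
        ((∑' p : Nat.Primes, (p : ℝ) ^ (-(2 * (1/2 + 1/(2 * Real.exp ((ℓ : ℝ) ^ (1 - δ))))))) /
         (∑' p : Nat.Primes,
            (p : ℝ) ^ (-(2 * (1/2 + 1/(2 * Real.exp (((ℓ - 1 : ℕ) : ℝ) ^ (1 - δ)))))))) ^ ((1 + ε)/2))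
      Filter.atTop (nhds 1) :=
  stmt_9_general δ ε hδ1
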